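/- Equivalently at the level of partial permutations: for m-partial permutations (d₁, ω₁), (d₂, ω₂) with product (d, ω) = (d₁∪d₂, ω̃₁∘ω̃₂), one has |d| + f(ω) ≤ (|d₁| + f(ω₁)) + (|d₂| + f(ω₂)), where f(σ) denotes the number of fixed points of σ outside [m] in its domain. -/

import Mathlib

/-- An `m`-partial permutation (of ℕ): a finite domain `d` containing `[m] = {0,…,m-1}`
together with a permutation of `d`, encoded by its extension `σ` to `ℕ` which is the
identity outside `d`. -/
structure MPP (m : ℕ) where
  d : Finset ℕ
  σ : Equiv.Perm ℕ
  range_sub : Finset.range m ⊆ d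
  fix : ∀ x ∉ d, σ x = x

namespace MPP

variable {m : ℕ}

@[ext] theorem ext {p q : MPP m} (hd : p.d = q.d) (hσ : p.σ = q.σ) : p = q := by
  cases p; cases q; simp only [mk.injEq]; exact ⟨hd, hσ⟩

/-- The product of `m`-partial permutations: union of the domains, composition of the
extended permutations (restricted to the union). -/
instance : Monoid (MPP m) where
  mul p q := ⟨p.d ∪ q.d, p.σ * q.σ, p.range_sub.trans Finset.subset_union_left,
    fun x hx => by
      have hq : x ∉ q.d := fun h => hx (Finset.mem_union_right _ h)
      have hp : x ∉ p.d := fun h => hx (Finset.mem_union_left _ h)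
      simp [Equiv.Perm.mul_apply, q.fix x hq, p.fix x hp]⟩
  one := ⟨Finset.range m, 1, le_refl _, fun _ _ => rfl⟩
  mul_assoc p q r := ext (Finset.union_assoc _ _ _) (mul_assoc _ _ _)
  one_mul p := ext (Finset.union_eq_right.mpr p.range_sub) (one_mul _)
  mul_one p := ext (Finset.union_eq_left.mpr p.range_sub) (mul_one _)

@[simp] theorem mul_d (p q : MPP m) : (p * q).d = p.d ∪ q.d := rfl
@[simp] theorem mul_σ (p q : MPP m) : (p * q).σ = p.σ * q.σ := rfl
@[simp] theorem one_d : (1 : MPP m).d = Finset.range m := rfl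
@[simp] theorem one_σ : (1 : MPP m).σ = 1 := rfl

/-- Two `m`-partial permutations have the same `m`-marked cycle type iff there is a
relabelling of ℕ fixing `[m]` pointwise carrying one to the other. -/
def sameType (p q : MPP m) : Prop :=
  ∃ σ : Equiv.Perm ℕ, (∀ x < m, σ x = x) ∧ p.d.image σ = q.d ∧ σ * p.σ * σ⁻¹ = q.σ

/-- `m₁`: the number of trivial cycles `(∗)`, i.e. fixed points of the permutation lying
in the domain but outside `[m]`. -/
def m1 (p : MPP m) : ℕ := ((p.d \ Finset.range m).filter (fun x => p.σ x = x)).card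

/-- `p` padded with fixed points so that its domain becomes `[n]` (when `p.d ⊆ [n]`);
this realizes the shape `ρ̲ₙ`. -/
def padTo (n : ℕ) (p : MPP m) : MPP m :=
  ⟨p.d ∪ Finset.range n, p.σ, p.range_sub.trans Finset.subset_union_left,
   fun x hx => p.fix x fun h => hx (Finset.mem_union_left _ h)⟩

/-- `p` with `k` fresh fixed points adjoined to its domain; this realizes the shape `ρᵏ`. -/
def addFix (p : MPP m) (k : ℕ) : MPP m :=
  ⟨p.d ∪ (Finset.range (p.d.sup id + 1 + k) \ Finset.range (p.d.sup id + 1)), p.σ,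
   p.range_sub.trans Finset.subset_union_left,
   fun x hx => p.fix x fun h => hx (Finset.mem_union_left _ h)⟩

/-- A shape is proper when it has no cycle `(∗)`, i.e. no fixed point outside `[m]`. -/
def isProper (p : MPP m) : Prop := ∀ x ∈ p.d, m ≤ x → p.σ x ≠ x

/-- The subgroup `Stab_n(m)` of permutations of ℕ fixing `[m]` pointwise and fixing
everything outside `[n]` (i.e. `Stab_n(m) ≤ S_n`). -/
def StabN (m n : ℕ) : Subgroup (Equiv.Perm ℕ) where
  carrier := {σ | (∀ x < m, σ x = x) ∧ (∀ x, n ≤ x → σ x = x)}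
  one_mem' := ⟨fun _ _ => rfl, fun _ _ => rfl⟩
  mul_mem' := by
    rintro σ τ ⟨h1, h2⟩ ⟨h3, h4⟩
    exact ⟨fun x hx => by simp [Equiv.Perm.mul_apply, h3 x hx, h1 x hx],
           fun x hx => by simp [Equiv.Perm.mul_apply, h4 x hx, h2 x hx]⟩
  inv_mem' := by
    rintro σ ⟨h1, h2⟩
    refine ⟨fun x hx => ?_, fun x hx => ?_⟩
    · conv_lhs => rw [← h1 x hx]
      exact σ.symm_apply_apply x
    · conv_lhs => rw [← h2 x hx]
      exact σ.symm_apply_apply x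

/-- The conjugation action of `Stab_n(m)` on `m`-partial permutations:
`σ·(d,ω) = (σ(d), σ∘ω∘σ⁻¹)`. -/
def conjAct {n : ℕ} (σ : StabN m n) (p : MPP m) : MPP m :=
  ⟨p.d.image (σ : Equiv.Perm ℕ), (σ : Equiv.Perm ℕ) * p.σ * (σ : Equiv.Perm ℕ)⁻¹,
   fun x hx => Finset.mem_image.mpr
     ⟨x, p.range_sub hx, σ.2.1 x (Finset.mem_range.mp hx)⟩,
   fun x hx => by
     have h1 : (σ : Equiv.Perm ℕ)⁻¹ x ∉ p.d := fun h =>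
       hx (Finset.mem_image.mpr ⟨_, h, Equiv.apply_symm_apply _ x⟩)
     simp only [Equiv.Perm.mul_apply, p.fix _ h1]; exact Equiv.apply_symm_apply _ x⟩

end MPP

/-- for m-partial permutations, |d| + f(ω) for the product is at most the
sum of the corresponding quantities of the factors, where f counts fixed points of the
permutation in its domain outside [m]. -/
theorem deg2_submultiplicative (m : ℕ) (p q : MPP m) :
    (p * q).d.card + (p * q).m1 ≤ (p.d.card + p.m1) + (q.d.card + q.m1) := by
  classical
  have mem_d : ∀ (r : MPP m) x, x ∈ r.d → r.σ x ∈ r.d := by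
    intro r x hx
    by_contra h
    have := r.fix _ h
    have hxx : r.σ x = x := r.σ.injective this
    rw [hxx] at h
    exact h hx
  set A := (p.d \ Finset.range m).filter (fun x => p.σ x = x) with hA
  set B := (q.d \ Finset.range m).filter (fun x => q.σ x = x) with hB
  set C := p.d ∩ q.d with hC
  set F := ((p.d ∪ q.d) \ Finset.range m).filter (fun x => (p.σ * q.σ) x = x) with hF
  have hFcard : F.card ≤ A.card + B.card + C.card := by
    have hinj : ∀ x ∈ F, (if x ∈ p.d ∨ q.σ x = x then x else q.σ x) ∈ A ∪ B ∪ C := by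
      intro x hx
      simp only [hF, Finset.mem_filter, Finset.mem_sdiff, Finset.mem_union] at hx
      obtain ⟨⟨hxd, hxm⟩, hfix⟩ := hx
      by_cases hq : q.σ x = x
      · simp only [hq, or_true, if_true]
        by_cases hp : x ∈ p.d
        · by_cases hq2 : x ∈ q.d
          · exact Finset.mem_union_right _ (Finset.mem_inter.mpr ⟨hp, hq2⟩)
          · have hpfix : p.σ x = x := by
              have := hfix; simp [Equiv.Perm.mul_apply, hq] at this; exact this
            exact Finset.mem_union_left _ (Finset.mem_union_left _
              (Finset.mem_filter.mpr ⟨Finset.mem_sdiff.mpr ⟨hp, hxm⟩, hpfix⟩))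
        · have hq2 : x ∈ q.d := hxd.resolve_left hp
          exact Finset.mem_union_left _ (Finset.mem_union_right _
            (Finset.mem_filter.mpr ⟨Finset.mem_sdiff.mpr ⟨hq2, hxm⟩, hq⟩))
      · by_cases hp : x ∈ p.d
        · simp only [hp, true_or, if_true]
          have hq2 : x ∈ q.d := by
            by_contra h; exact hq (q.fix _ h)
          exact Finset.mem_union_right _ (Finset.mem_inter.mpr ⟨hp, hq2⟩)
        · simp only [hp, hq, or_self, if_false]
          have hq2 : x ∈ q.d := hxd.resolve_left hp
          have h1 : q.σ x ∈ q.d := mem_d q x hq2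
          have h2 : q.σ x ∈ p.d := by
            by_contra h
            have := p.fix _ h
            have : q.σ x = x := by
              have h3 := hfix; simp only [Equiv.Perm.mul_apply] at h3
              rw [this] at h3; exact h3
            exact hq this
          exact Finset.mem_union_right _ (Finset.mem_inter.mpr ⟨h2, h1⟩)
    calc F.card ≤ (A ∪ B ∪ C).card := by
          apply Finset.card_le_card_of_injOn _ hinj
          intro x hx y hy hxy
          simp only [hF, Finset.mem_filter, Finset.mem_sdiff, Finset.mem_union,
            Finset.mem_coe] at hx hy
          obtain ⟨⟨hxd, hxm⟩, hxfix⟩ := hx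
          obtain ⟨⟨hyd, hym⟩, hyfix⟩ := hy
          simp only [Equiv.Perm.mul_apply] at hxfix hyfix
          by_cases h1 : x ∈ p.d ∨ q.σ x = x <;> by_cases h2 : y ∈ p.d ∨ q.σ y = y <;>
            simp only [h1, h2, if_true, if_false] at hxy
          · exact hxy
          · -- φ x = x, φ y = q.σ y, hxy : x = q.σ y, y ∉ p.d ∧ q.σ y ≠ y
            push_neg at h2
            exfalso
            rcases h1 with h1 | h1
            · have hmem : p.σ x ∈ p.d := mem_d p x h1
              rw [hxy, hyfix] at hmem
              exact h2.1 hmem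
            · have hxy2 : q.σ x = q.σ y := by rw [h1, hxy]
              have hxey : x = y := q.σ.injective hxy2
              rw [hxey] at h1
              exact h2.2 h1
          · -- hxy : q.σ x = y, x ∉ p.d ∧ q.σ x ≠ x
            push_neg at h1
            exfalso
            rcases h2 with h2 | h2
            · have hmem : p.σ y ∈ p.d := mem_d p y h2
              rw [← hxy, hxfix] at hmem
              exact h1.1 hmem
            · have hxy2 : q.σ x = q.σ y := by rw [h2, hxy]
              have hxey : x = y := q.σ.injective hxy2
              rw [hxey] at h1
              exact h1.2 h2
          · exact q.σ.injective hxy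
        _ ≤ (A ∪ B).card + C.card := Finset.card_union_le _ _
        _ ≤ A.card + B.card + C.card := by
          have := Finset.card_union_le A B; omega
  have hunion : (p.d ∪ q.d).card + C.card = p.d.card + q.d.card :=
    Finset.card_union_add_card_inter _ _
  have hm1 : (p * q).m1 = F.card := rfl
  have hmp : p.m1 = A.card := rfl
  have hmq : q.m1 = B.card := rfl
  have hd : (p * q).d = p.d ∪ q.d := rfl
  rw [hm1, hmp, hmq, hd]
  omega
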